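/- Let η ∈ ℂ⟦u,v⟧ be nonzero, let (a,b) be coprime positive integers, set w := (a,b) and μ := w(η). Then for every c ∈ ℂ with c ≠ 0, the order of the substituted series η_c ∈ ℂ⟦t⟧ satisfies order(η_c) ≥ μ, and the set of c ∈ ℂ∖{0} for which order(η_c) > μ is finite. In particular, the minimum of order(η_c) over c ∈ ℂ∖{0} equals μ. (Part (1) of the paper's Proposition 7.15, which interprets the tropical function of the divisor Z(η) as the minimal intersection number with binomial curves u^b = λv^a, via the parametrization t ↦ (c·t^a, t^b) with c^b = λ.) -/

import Mathlib

/-- The coefficient of `η` at the exponent pair `(p, q)`. -/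
noncomputable def coeff2 (η : MvPowerSeries (Fin 2) ℂ) (p q : ℕ) : ℂ :=
  MvPowerSeries.coeff (Finsupp.single 0 p + Finsupp.single 1 q) η

/-- The `(a,b)`-weighted order of `η`: the minimum of `a*p + b*q` over the support of `η`. -/
noncomputable def wOrder (a b : ℕ) (η : MvPowerSeries (Fin 2) ℂ) : ℕ :=
  sInf {n : ℕ | ∃ p q : ℕ, coeff2 η p q ≠ 0 ∧ n = a * p + b * q}

/-- The univariate power series `η_c` obtained from `η ∈ ℂ⟦u,v⟧` by the substitution
`u := c·t^a`, `v := t^b`.  Since `a, b ≥ 1`, the coefficient of `t^N` only involves the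
terms of `η` of bidegree `< (N+1, N+1)`, so it may be computed by substituting into the
corresponding truncation of `η`. -/
noncomputable def substBinomial (a b : ℕ) (c : ℂ) (η : MvPowerSeries (Fin 2) ℂ) :
    PowerSeries ℂ :=
  PowerSeries.mk fun N =>
    PowerSeries.coeff N
      (MvPolynomial.aeval
        ![PowerSeries.C c * PowerSeries.X ^ a, PowerSeries.X ^ b]
        (MvPowerSeries.trunc ℂ (Finsupp.single 0 (N + 1) + Finsupp.single 1 (N + 1)) η))

/-!
Substituting `u := c t^a`, `v := t^b` sends the monomial `u^p v^q` to `c^p t^(a p + b q)`, so the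
coefficient of `t^N` in `η_c` is the value at `c` of the polynomial `∑ η_{p,q} X^p` over the
exponents of weight `a p + b q = N`. This polynomial vanishes for `N < μ`, and for `N = μ` it is
nonzero, since distinct exponents of the same weight have distinct `p`. Hence `order η_c ≥ μ`,
with equality unless `c` is one of the finitely many roots of the weight-`μ` polynomial.
-/

open Polynomial

lemma Finsupp.single_zero_add_single_one (d : Fin 2 →₀ ℕ) :
    Finsupp.single 0 (d 0) + Finsupp.single 1 (d 1) = d := by
  ext i
  fin_cases i <;> simp

lemma aeval_monomial_binomial {R : Type*} [CommSemiring R] (a b : ℕ) (c : R) (d : Fin 2 →₀ ℕ)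
    (r : R) :
    MvPolynomial.aeval ![PowerSeries.C c * PowerSeries.X ^ a, PowerSeries.X ^ b]
        (MvPolynomial.monomial d r) =
      PowerSeries.C (r * c ^ d 0) * PowerSeries.X ^ (a * d 0 + b * d 1) := by
  rw [MvPolynomial.aeval_monomial, Finsupp.prod_pow, Fin.prod_univ_two]
  simp only [Matrix.cons_val_zero, Matrix.cons_val_one, PowerSeries.algebraMap_apply,
    Algebra.algebraMap_self, RingHom.id_apply, mul_pow, ← map_pow, pow_add, pow_mul, map_mul]
  ring

/-- The exponents `d = (p, q)` of weight `a p + b q = N` that survive the truncation in the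
definition of `substBinomial`. -/
noncomputable def weightFiber (a b N : ℕ) : Finset (Fin 2 →₀ ℕ) :=
  (Finset.Iio (Finsupp.single 0 (N + 1) + Finsupp.single 1 (N + 1))).filter
    fun d => a * d 0 + b * d 1 = N

/-- The `(a, b)`-homogeneous component of `η` of weight `N`, dehomogenized at `v = 1`. -/
noncomputable def weightedPart (a b N : ℕ) (η : MvPowerSeries (Fin 2) ℂ) : ℂ[X] :=
  ∑ d ∈ weightFiber a b N, C (η.coeff d) * X ^ d 0

section

variable {a b : ℕ} {η : MvPowerSeries (Fin 2) ℂ}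

lemma coeff2_apply (d : Fin 2 →₀ ℕ) : coeff2 η (d 0) (d 1) = η.coeff d := by
  rw [coeff2, Finsupp.single_zero_add_single_one]

lemma wOrder_le {p q : ℕ} (h : coeff2 η p q ≠ 0) : wOrder a b η ≤ a * p + b * q :=
  Nat.sInf_le ⟨p, q, h, rfl⟩

lemma exists_coeff2_ne_zero_wOrder (hη : η ≠ 0) :
    ∃ p q, coeff2 η p q ≠ 0 ∧ a * p + b * q = wOrder a b η := by
  obtain ⟨d, hd⟩ : ∃ d, η.coeff d ≠ 0 := by
    by_contra! h
    exact hη (MvPowerSeries.ext fun d => by simp [h d])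
  obtain ⟨p, q, hpq, hμ⟩ := Nat.sInf_mem (s := {n | ∃ p q, coeff2 η p q ≠ 0 ∧ n = a * p + b * q})
    ⟨_, d 0, d 1, by rwa [coeff2_apply], rfl⟩
  exact ⟨p, q, hpq, hμ.symm⟩

lemma coeff_substBinomial (c : ℂ) (N : ℕ) :
    PowerSeries.coeff N (substBinomial a b c η) = (weightedPart a b N η).eval c := by
  rw [substBinomial, PowerSeries.coeff_mk, MvPowerSeries.trunc,
    MvPowerSeries.truncFinset_apply, map_sum, map_sum, weightedPart, weightFiber,
    Finset.sum_filter, eval_finsetSum]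
  refine Finset.sum_congr rfl fun d _ => ?_
  rw [aeval_monomial_binomial, PowerSeries.coeff_C_mul_X_pow]
  simp only [eq_comm (a := N)]
  split_ifs <;> simp

lemma weightedPart_eq_zero_of_lt_wOrder {N : ℕ} (hN : N < wOrder a b η) :
    weightedPart a b N η = 0 := by
  refine Finset.sum_eq_zero fun d hd => ?_
  have hw : a * d 0 + b * d 1 = N := (Finset.mem_filter.1 hd).2
  have hd0 : η.coeff d = 0 := by
    by_contra h
    rw [← coeff2_apply] at h
    exact absurd (wOrder_le (a := a) (b := b) h) (by omega)
  rw [hd0, C_0, zero_mul]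

lemma coeff_weightedPart (ha : 0 < a) (hb : 0 < b) (p q : ℕ) :
    (weightedPart a b (a * p + b * q) η).coeff p = coeff2 η p q := by
  set d₀ : Fin 2 →₀ ℕ := Finsupp.single 0 p + Finsupp.single 1 q
  have hd₀ : d₀ 0 = p ∧ d₀ 1 = q := by simp [d₀]
  have hmem : d₀ ∈ weightFiber a b (a * p + b * q) := by
    refine Finset.mem_filter.2 ⟨Finset.mem_Iio.2 ?_, by rw [hd₀.1, hd₀.2]⟩
    have hp : p ≤ a * p := Nat.le_mul_of_pos_left p ha
    have hq : q ≤ b * q := Nat.le_mul_of_pos_left q hb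
    refine lt_of_le_of_ne (Finsupp.le_def.2 fun i => ?_) fun h => ?_
    · fin_cases i <;> simp [d₀] <;> omega
    · have := DFunLike.congr_fun h 0
      simp [d₀] at this
      omega
  rw [weightedPart, finsetSum_coeff, Finset.sum_eq_single_of_mem d₀ hmem]
  · rw [coeff_C_mul_X_pow, if_pos hd₀.1.symm, coeff2]
  · intro d hd hne
    rw [coeff_C_mul_X_pow, if_neg]
    intro hp
    have hw : a * d 0 + b * d 1 = a * p + b * q := (Finset.mem_filter.1 hd).2
    have hq : d 1 = q := Nat.eq_of_mul_eq_mul_left hb (by rw [← hp] at hw; omega)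
    exact hne (by rw [← Finsupp.single_zero_add_single_one d, ← hp, hq])

lemma weightedPart_wOrder_ne_zero (ha : 0 < a) (hb : 0 < b) (hη : η ≠ 0) :
    weightedPart a b (wOrder a b η) η ≠ 0 := by
  obtain ⟨p, q, hpq, hμ⟩ := exists_coeff2_ne_zero_wOrder (a := a) (b := b) hη
  intro h
  rw [← hμ] at h
  exact hpq (by rw [← coeff_weightedPart ha hb, h, coeff_zero])

lemma wOrder_le_order_substBinomial (c : ℂ) :
    (wOrder a b η : ℕ∞) ≤ (substBinomial a b c η).order :=
  PowerSeries.le_order _ _ fun N hN => by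
    rw [coeff_substBinomial, weightedPart_eq_zero_of_lt_wOrder (by exact_mod_cast hN), eval_zero]

lemma wOrder_lt_order_substBinomial_iff (c : ℂ) :
    (wOrder a b η : ℕ∞) < (substBinomial a b c η).order ↔
      (weightedPart a b (wOrder a b η) η).IsRoot c := by
  rw [IsRoot, ← coeff_substBinomial]
  refine ⟨PowerSeries.coeff_of_lt_order _, fun h => ?_⟩
  refine (wOrder_le_order_substBinomial c).lt_of_ne fun heq => ?_
  exact (PowerSeries.order_eq_nat.1 heq.symm).1 h

end

theorem order_substBinomial_min_general (η : MvPowerSeries (Fin 2) ℂ) (hη : η ≠ 0)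
    (a b : ℕ) (ha : 0 < a) (hb : 0 < b) :
    (∀ c : ℂ, c ≠ 0 → (wOrder a b η : ℕ∞) ≤ (substBinomial a b c η).order) ∧
      {c : ℂ | c ≠ 0 ∧ (wOrder a b η : ℕ∞) < (substBinomial a b c η).order}.Finite ∧
      ∃ c : ℂ, c ≠ 0 ∧ (substBinomial a b c η).order = (wOrder a b η : ℕ∞) := by
  have hroots : {c : ℂ | (weightedPart a b (wOrder a b η) η).IsRoot c}.Finite :=
    finite_setOfPred_isRoot (weightedPart_wOrder_ne_zero ha hb hη)
  refine ⟨fun c _ => wOrder_le_order_substBinomial c,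
    hroots.subset fun c hc => (wOrder_lt_order_substBinomial_iff c).1 hc.2, ?_⟩
  obtain ⟨c, hc⟩ := (hroots.union (Set.finite_singleton 0)).infinite_compl.nonempty
  simp only [Set.mem_compl_iff, Set.mem_union, Set.mem_ofPred_eq, Set.mem_singleton_iff,
    not_or] at hc
  refine ⟨c, hc.2, (wOrder_le_order_substBinomial c).antisymm' ?_⟩
  exact not_lt.1 fun hlt => hc.1 ((wOrder_lt_order_substBinomial_iff c).1 hlt)

/-- for `η ≠ 0` and coprime positive `a, b`, with `μ = w(η)`:
the `t`-adic order of `η_c` is `≥ μ` for every `c ≠ 0`, the set of `c ≠ 0` where it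
exceeds `μ` is finite, and in particular the minimum of the orders over `c ≠ 0` is
attained and equals `μ`. -/
theorem order_substBinomial_min (η : MvPowerSeries (Fin 2) ℂ) (hη : η ≠ 0)
    (a b : ℕ) (ha : 0 < a) (hb : 0 < b) (hab : Nat.Coprime a b) :
    (∀ c : ℂ, c ≠ 0 → (wOrder a b η : ℕ∞) ≤ (substBinomial a b c η).order) ∧
      {c : ℂ | c ≠ 0 ∧ (wOrder a b η : ℕ∞) < (substBinomial a b c η).order}.Finite ∧
      ∃ c : ℂ, c ≠ 0 ∧ (substBinomial a b c η).order = (wOrder a b η : ℕ∞) :=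
  order_substBinomial_min_general η hη a b ha hb
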